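/- Let ψ : ℝⁿ → ℂᴺ be a smooth solution of the Soler equation Dψ = λψ + μ|ψ|²ψ, and define its stress-energy tensor S_{ij} := ⟨γᵢ∂ⱼψ + γⱼ∂ᵢψ, ψ⟩ − δᵢⱼ μ|ψ|⁴ for 1 ≤ i,j ≤ n. Then S is symmetric and divergence-free, i.e. S_{ij} = S_{ji} and ∑ⱼ₌₁ⁿ ∂ⱼS_{ij} = 0 for every i; moreover its trace satisfies ∑ᵢ₌₁ⁿ S_{ii} = 2λ|ψ|² + (2−n)μ|ψ|⁴. -/

import Mathlib

open Matrix MeasureTheory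

noncomputable section

/-- Partial derivative of `f` in the `i`-th coordinate direction at `x`. -/
def epd {n : ℕ} {E : Type*} [NormedAddCommGroup E] [NormedSpace ℝ E]
    (f : EuclideanSpace ℝ (Fin n) → E) (i : Fin n) (x : EuclideanSpace ℝ (Fin n)) : E :=
  fderiv ℝ f x (EuclideanSpace.single i 1)

/-- The Euclidean Dirac operator associated to the matrices `γ`. -/
def Dirac {n N : ℕ} (γ : Fin n → Matrix (Fin N) (Fin N) ℂ)
    (ψ : EuclideanSpace ℝ (Fin n) → (Fin N → ℂ)) (x : EuclideanSpace ℝ (Fin n)) :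
    Fin N → ℂ :=
  ∑ i, (γ i).mulVec (epd ψ i x)

/-- Real part of the standard Hermitian inner product on `ℂᴺ`. -/
def rinner {N : ℕ} (a b : Fin N → ℂ) : ℝ := (∑ k, star (a k) * b k).re

/-- Squared Hermitian norm on `ℂᴺ`. -/
def nsq {N : ℕ} (a : Fin N → ℂ) : ℝ := rinner a a

/-- The matrices `γᵢ` are skew-Hermitian and satisfy the Clifford relations
`γᵢγⱼ + γⱼγᵢ = -2 δᵢⱼ Id`. -/
def IsCliffordFamily {n N : ℕ} (γ : Fin n → Matrix (Fin N) (Fin N) ℂ) : Prop :=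
  (∀ i, (γ i)ᴴ = -(γ i)) ∧
  (∀ i j, γ i * γ j + γ j * γ i =
    if i = j then -(2 : ℂ) • (1 : Matrix (Fin N) (Fin N) ℂ) else 0)

/-- The Soler equation `Dψ = λψ + μ|ψ|²ψ`. -/
def IsSolerSolution {n N : ℕ} (γ : Fin n → Matrix (Fin N) (Fin N) ℂ) (lam mu : ℝ)
    (ψ : EuclideanSpace ℝ (Fin n) → (Fin N → ℂ)) : Prop :=
  ∀ x, Dirac γ ψ x = (lam + mu * nsq (ψ x)) • ψ x

/-- The stress-energy tensor of the Soler model: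
`S_{ij} = ⟨γᵢ∂ⱼψ + γⱼ∂ᵢψ, ψ⟩ - δᵢⱼ μ |ψ|⁴`. -/
def solerStress {n N : ℕ} (γ : Fin n → Matrix (Fin N) (Fin N) ℂ) (mu : ℝ)
    (ψ : EuclideanSpace ℝ (Fin n) → (Fin N → ℂ)) (i j : Fin n)
    (x : EuclideanSpace ℝ (Fin n)) : ℝ :=
  rinner ((γ i).mulVec (epd ψ j x) + (γ j).mulVec (epd ψ i x)) (ψ x)
    - (if i = j then 1 else 0) * (mu * (nsq (ψ x)) ^ 2)

/-! Differentiating `S_{ij}` and summing over `j`, the terms `⟨γᵢ∂ⱼψ, ∂ⱼψ⟩` vanish since `γᵢ` is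
skew-Hermitian, `∑ⱼ ⟨γⱼ∂ᵢψ, ∂ⱼψ⟩ = -⟨∂ᵢψ, Dψ⟩`, and the Laplacian in `∑ⱼ ⟨γᵢ∂ⱼ∂ⱼψ, ψ⟩` is
rewritten as `-D²ψ` by the Clifford relations and the symmetry of second derivatives. For any
equation `Dψ = fψ` with `f` real, and using `⟨γᵢγⱼψ, ψ⟩ = -δᵢⱼ|ψ|²`, this leaves
`∑ⱼ ∂ⱼ⟨γᵢ∂ⱼψ + γⱼ∂ᵢψ, ψ⟩ = 2 ∂ᵢf |ψ|²`; for `f = λ + μ|ψ|²` this is `∂ᵢ(μ|ψ|⁴)`.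
The trace is `2⟨Dψ, ψ⟩ - nμ|ψ|⁴`. -/

section Rinner

variable {N : ℕ}

lemma rinner_eq_re_dotProduct (a b : Fin N → ℂ) : rinner a b = (star a ⬝ᵥ b).re := rfl

lemma rinner_comm (a b : Fin N → ℂ) : rinner a b = rinner b a := by
  rw [rinner_eq_re_dotProduct, star_dotProduct, Complex.star_def, Complex.conj_re]; rfl

lemma rinner_add_left (a b c : Fin N → ℂ) : rinner (a + b) c = rinner a c + rinner b c := by
  simp [rinner_eq_re_dotProduct, add_dotProduct]

lemma rinner_add_right (a b c : Fin N → ℂ) : rinner a (b + c) = rinner a b + rinner a c := by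
  simp [rinner_eq_re_dotProduct, dotProduct_add]

lemma rinner_smul_left (r : ℝ) (a b : Fin N → ℂ) : rinner (r • a) b = r * rinner a b := by
  simp [rinner_eq_re_dotProduct]

lemma rinner_smul_right (r : ℝ) (a b : Fin N → ℂ) : rinner a (r • b) = r * rinner a b := by
  simp [rinner_eq_re_dotProduct]

lemma rinner_neg_left (a b : Fin N → ℂ) : rinner (-a) b = -rinner a b := by
  simp [rinner_eq_re_dotProduct]

lemma rinner_neg_right (a b : Fin N → ℂ) : rinner a (-b) = -rinner a b := by
  simp [rinner_eq_re_dotProduct]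

lemma rinner_sum_left {ι : Type*} (s : Finset ι) (v : ι → Fin N → ℂ) (b : Fin N → ℂ) :
    rinner (∑ i ∈ s, v i) b = ∑ i ∈ s, rinner (v i) b := by
  simp [rinner_eq_re_dotProduct, star_sum, sum_dotProduct]

lemma rinner_sum_right {ι : Type*} (s : Finset ι) (a : Fin N → ℂ) (v : ι → Fin N → ℂ) :
    rinner a (∑ i ∈ s, v i) = ∑ i ∈ s, rinner a (v i) := by
  simp [rinner_eq_re_dotProduct, dotProduct_sum]

lemma rinner_mulVec_left (M : Matrix (Fin N) (Fin N) ℂ) (a b : Fin N → ℂ) :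
    rinner (M *ᵥ a) b = rinner a (Mᴴ *ᵥ b) := by
  rw [rinner_eq_re_dotProduct, star_mulVec, ← dotProduct_mulVec]; rfl

def rinnerBilin (N : ℕ) : (Fin N → ℂ) →L[ℝ] (Fin N → ℂ) →L[ℝ] ℝ :=
  (LinearMap.mk₂ ℝ rinner rinner_add_left rinner_smul_left rinner_add_right
    rinner_smul_right).toContinuousBilinearMap

@[simp] lemma rinnerBilin_apply (a b : Fin N → ℂ) : rinnerBilin N a b = rinner a b := rfl

lemma rinner_mulVec_left_of_skew {M : Matrix (Fin N) (Fin N) ℂ} (hM : Mᴴ = -M)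
    (a b : Fin N → ℂ) : rinner (M *ᵥ a) b = -rinner a (M *ᵥ b) := by
  rw [rinner_mulVec_left, hM, neg_mulVec, rinner_neg_right]

lemma rinner_mulVec_self_of_skew {M : Matrix (Fin N) (Fin N) ℂ} (hM : Mᴴ = -M)
    (v : Fin N → ℂ) : rinner (M *ᵥ v) v = 0 := by
  have h := rinner_mulVec_left_of_skew hM v v
  rw [rinner_comm v] at h
  linarith

end Rinner

namespace IsCliffordFamily

variable {n N : ℕ} {γ : Fin n → Matrix (Fin N) (Fin N) ℂ}

lemma mul_self (hγ : IsCliffordFamily γ) (i : Fin n) : γ i * γ i = -1 := by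
  have h := hγ.2 i i
  rw [if_pos rfl, ← two_smul ℂ, neg_smul] at h
  exact smul_right_injective _ two_ne_zero (h.trans (smul_neg _ _).symm)

lemma conjTranspose_mul_of_ne (hγ : IsCliffordFamily γ) {i j : Fin n} (hij : i ≠ j) :
    (γ i * γ j)ᴴ = -(γ i * γ j) := by
  have h := hγ.2 j i
  rw [if_neg (Ne.symm hij)] at h
  rw [conjTranspose_mul, hγ.1 i, hγ.1 j, neg_mul_neg]
  exact eq_neg_of_add_eq_zero_left h

lemma rinner_mulVec_mulVec_self (hγ : IsCliffordFamily γ) (i j : Fin n) (v : Fin N → ℂ) :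
    rinner (γ i *ᵥ γ j *ᵥ v) v = if i = j then -nsq v else 0 := by
  rw [mulVec_mulVec]
  split_ifs with hij
  · rw [hij, hγ.mul_self, neg_mulVec, one_mulVec, rinner_neg_left, nsq]
  · exact rinner_mulVec_self_of_skew (hγ.conjTranspose_mul_of_ne hij) v

/-- `D² = -Δ`, at the level of a symmetric array of second derivatives. -/
lemma sum_mulVec_sum_mulVec_of_symm (hγ : IsCliffordFamily γ) {w : Fin n → Fin n → Fin N → ℂ}
    (hw : ∀ j k, w j k = w k j) :
    ∑ j, γ j *ᵥ ∑ k, γ k *ᵥ w k j = -∑ j, w j j := by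
  set X := ∑ j, γ j *ᵥ ∑ k, γ k *ᵥ w k j
  have hX : X = ∑ j, ∑ k, (γ j * γ k) *ᵥ w k j := by
    simp only [X, mulVec_sum, mulVec_mulVec]
  have hX' : X = ∑ j, ∑ k, (γ k * γ j) *ᵥ w k j := by
    rw [hX, Finset.sum_comm]
    simp only [hw]
  have hpair : ∀ j k, (γ j * γ k) *ᵥ w k j + (γ k * γ j) *ᵥ w k j
      = if j = k then -(2 : ℂ) • w j j else 0 := by
    intro j k
    rw [← add_mulVec, hγ.2]
    split_ifs with h
    · rw [h, smul_mulVec, one_mulVec]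
    · exact zero_mulVec _
  have hXX : X + X = -(2 : ℂ) • ∑ j, w j j := by
    nth_rewrite 2 [hX']
    simp only [hX, ← Finset.sum_add_distrib, hpair, Finset.sum_ite_eq, Finset.mem_univ, if_true,
      Finset.smul_sum]
  refine smul_right_injective _ (two_ne_zero (α := ℂ)) ?_
  change (2 : ℂ) • X = (2 : ℂ) • -∑ j, w j j
  rw [two_smul, hXX, neg_smul, smul_neg]

/-- `v`, `d`, `h`, `f`, `df` stand for the values at one point of `ψ`, `∂ψ`, `∂∂ψ`
(`h k a = ∂ₐ∂ₖψ`), `f` and `∂f`, where `Dψ = fψ`; `hh` is the derivative of that equation. -/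
lemma sum_rinner_jet_eq (hγ : IsCliffordFamily γ) {v : Fin N → ℂ} {d : Fin n → Fin N → ℂ}
    {h : Fin n → Fin n → Fin N → ℂ} {f : ℝ} {df : Fin n → ℝ}
    (hd : ∑ k, γ k *ᵥ d k = f • v) (hh : ∀ a, ∑ k, γ k *ᵥ h k a = df a • v + f • d a)
    (hsymm : ∀ a b, h a b = h b a) (i : Fin n) :
    ∑ j, (rinner (γ i *ᵥ h j j + γ j *ᵥ h i j) v + rinner (γ i *ᵥ d j + γ j *ᵥ d i) (d j))
      = 2 * df i * nsq v := by
  have hlap : ∑ j, h j j = -(∑ j, df j • γ j *ᵥ v + (f * f) • v) := by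
    rw [← neg_eq_iff_eq_neg, ← hγ.sum_mulVec_sum_mulVec_of_symm hsymm]
    simp only [hh, mulVec_add, mulVec_smul, Finset.sum_add_distrib, ← Finset.smul_sum, hd,
      smul_smul]
  have h1 : ∑ j, rinner (γ i *ᵥ h j j) v = df i * nsq v := by
    rw [← rinner_sum_left, ← mulVec_sum, hlap]
    simp only [mulVec_neg, mulVec_add, mulVec_sum, mulVec_smul, rinner_neg_left,
      rinner_add_left, rinner_sum_left, rinner_smul_left, hγ.rinner_mulVec_mulVec_self,
      rinner_mulVec_self_of_skew (hγ.1 i)]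
    simp only [mul_ite, mul_neg, mul_zero, Finset.sum_ite_eq, Finset.mem_univ, if_true, add_zero,
      neg_neg]
  have h2 : ∑ j, rinner (γ j *ᵥ h i j) v = df i * nsq v + f * rinner (d i) v := by
    rw [← rinner_sum_left]
    simp only [hsymm i, hh, rinner_add_left, rinner_smul_left, nsq]
  have h3 : ∑ j, rinner (γ i *ᵥ d j) (d j) = 0 :=
    Finset.sum_eq_zero fun j _ => rinner_mulVec_self_of_skew (hγ.1 i) (d j)
  have h4 : ∑ j, rinner (γ j *ᵥ d i) (d j) = -(f * rinner (d i) v) := by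
    simp only [rinner_mulVec_left_of_skew (hγ.1 _), Finset.sum_neg_distrib, ← rinner_sum_right,
      hd, rinner_smul_right]
  simp only [rinner_add_left, Finset.sum_add_distrib, h1, h2, h3, h4]
  ring

end IsCliffordFamily

section PartialDerivatives

variable {n : ℕ} {E F G : Type*} [NormedAddCommGroup E] [NormedSpace ℝ E]
  [NormedAddCommGroup F] [NormedSpace ℝ F] [NormedAddCommGroup G] [NormedSpace ℝ G]
  {x : EuclideanSpace ℝ (Fin n)}

lemma epd_add {f g : EuclideanSpace ℝ (Fin n) → E} (hf : DifferentiableAt ℝ f x)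
    (hg : DifferentiableAt ℝ g x) (i : Fin n) :
    epd (fun y => f y + g y) i x = epd f i x + epd g i x := by
  rw [epd, fderiv_fun_add hf hg]; rfl

lemma epd_sub {f g : EuclideanSpace ℝ (Fin n) → E} (hf : DifferentiableAt ℝ f x)
    (hg : DifferentiableAt ℝ g x) (i : Fin n) :
    epd (fun y => f y - g y) i x = epd f i x - epd g i x := by
  rw [epd, fderiv_fun_sub hf hg]; rfl

lemma epd_sum {ι : Type*} (s : Finset ι) {f : ι → EuclideanSpace ℝ (Fin n) → E}
    (hf : ∀ k ∈ s, DifferentiableAt ℝ (f k) x) (i : Fin n) :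
    epd (fun y => ∑ k ∈ s, f k y) i x = ∑ k ∈ s, epd (f k) i x := by
  rw [epd, fderiv_fun_sum hf, FunLike.coe_sum, Finset.sum_apply]; rfl

lemma epd_clm_comp (L : E →L[ℝ] F) {f : EuclideanSpace ℝ (Fin n) → E}
    (hf : DifferentiableAt ℝ f x) (i : Fin n) :
    epd (fun y => L (f y)) i x = L (epd f i x) := by
  rw [epd, fderiv_fun_comp x L.differentiableAt hf, L.fderiv]; rfl

lemma epd_bilinear (B : E →L[ℝ] F →L[ℝ] G) {f : EuclideanSpace ℝ (Fin n) → E}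
    {g : EuclideanSpace ℝ (Fin n) → F} (hf : DifferentiableAt ℝ f x)
    (hg : DifferentiableAt ℝ g x) (i : Fin n) :
    epd (fun y => B (f y) (g y)) i x = B (epd f i x) (g x) + B (f x) (epd g i x) := by
  rw [epd, B.fderiv_of_bilinear hf hg]
  simp [epd, add_comm]

lemma epd_comp_hasDerivAt {φ : ℝ → ℝ} {φ' : ℝ} {h : EuclideanSpace ℝ (Fin n) → ℝ}
    (hφ : HasDerivAt φ φ' (h x)) (hh : DifferentiableAt ℝ h x) (i : Fin n) :
    epd (fun y => φ (h y)) i x = φ' * epd h i x := by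
  change fderiv ℝ (φ ∘ h) x _ = _
  rw [(hφ.comp_hasFDerivAt x hh.hasFDerivAt).fderiv]
  simp [epd]

lemma ContDiff.epd {m : ℕ} {f : EuclideanSpace ℝ (Fin n) → E} (hf : ContDiff ℝ (m + 1) f)
    (i : Fin n) :
    ContDiff ℝ m (epd f i) :=
  (hf.fderiv_right le_rfl).clm_apply contDiff_const

lemma epd_epd_comm {f : EuclideanSpace ℝ (Fin n) → E} (hf : ContDiff ℝ 2 f) (i j : Fin n) :
    epd (epd f i) j x = epd (epd f j) i x := by
  have hsymm := (hf.contDiffAt (x := x)).isSymmSndFDerivAt (by simp)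
  have h2 : ∀ a b : Fin n, epd (epd f a) b x
      = fderiv ℝ (fderiv ℝ f) x (EuclideanSpace.single b 1) (EuclideanSpace.single a 1) := by
    intro a b
    rw [epd, show epd f a = fun y => fderiv ℝ f y (EuclideanSpace.single a 1) from rfl,
      fderiv_clm_apply ((hf.fderiv_right (m := 1) le_rfl).differentiable one_ne_zero x)
        (differentiableAt_const _)]
    simp
  rw [h2, h2, hsymm]

end PartialDerivatives

section Dirac

variable {n N : ℕ} {γ : Fin n → Matrix (Fin N) (Fin N) ℂ}
  {ψ : EuclideanSpace ℝ (Fin n) → (Fin N → ℂ)} {x : EuclideanSpace ℝ (Fin n)}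

lemma differentiableAt_mulVec (M : Matrix (Fin N) (Fin N) ℂ) (hψ : DifferentiableAt ℝ ψ x) :
    DifferentiableAt ℝ (fun y => M *ᵥ ψ y) x :=
  (M.mulVecLin.restrictScalars ℝ).toContinuousLinearMap.differentiableAt.comp x hψ

lemma epd_mulVec (M : Matrix (Fin N) (Fin N) ℂ) (hψ : DifferentiableAt ℝ ψ x) (i : Fin n) :
    epd (fun y => M *ᵥ ψ y) i x = M *ᵥ epd ψ i x :=
  epd_clm_comp (M.mulVecLin.restrictScalars ℝ).toContinuousLinearMap hψ i

lemma epd_rinner {φ ψ : EuclideanSpace ℝ (Fin n) → (Fin N → ℂ)} (hφ : DifferentiableAt ℝ φ x)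
    (hψ : DifferentiableAt ℝ ψ x) (i : Fin n) :
    epd (fun y => rinner (φ y) (ψ y)) i x
      = rinner (epd φ i x) (ψ x) + rinner (φ x) (epd ψ i x) :=
  epd_bilinear (rinnerBilin N) hφ hψ i

lemma DifferentiableAt.rinner {φ ψ : EuclideanSpace ℝ (Fin n) → (Fin N → ℂ)}
    (hφ : DifferentiableAt ℝ φ x) (hψ : DifferentiableAt ℝ ψ x) :
    DifferentiableAt ℝ (fun y => rinner (φ y) (ψ y)) x :=
  ((rinnerBilin N).hasFDerivAt_of_bilinear hφ.hasFDerivAt hψ.hasFDerivAt).differentiableAt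

lemma epd_dirac (hψ : ∀ k, DifferentiableAt ℝ (epd ψ k) x) (i : Fin n) :
    epd (Dirac γ ψ) i x = ∑ k, γ k *ᵥ epd (epd ψ k) i x := by
  rw [show Dirac γ ψ = fun y => ∑ k, γ k *ᵥ epd ψ k y from rfl,
    epd_sum _ fun k _ => differentiableAt_mulVec _ (hψ k)]
  exact Finset.sum_congr rfl fun k _ => epd_mulVec _ (hψ k) i

def kineticStress (γ : Fin n → Matrix (Fin N) (Fin N) ℂ)
    (ψ : EuclideanSpace ℝ (Fin n) → (Fin N → ℂ)) (i j : Fin n) (x : EuclideanSpace ℝ (Fin n)) :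
    ℝ :=
  rinner (γ i *ᵥ epd ψ j x + γ j *ᵥ epd ψ i x) (ψ x)

lemma sum_kineticStress_self (x : EuclideanSpace ℝ (Fin n)) :
    ∑ i, kineticStress γ ψ i i x = 2 * rinner (Dirac γ ψ x) (ψ x) := by
  simp only [kineticStress, rinner_add_left, Finset.sum_add_distrib, ← rinner_sum_left]
  rw [two_mul]
  rfl

lemma IsCliffordFamily.sum_epd_kineticStress (hγ : IsCliffordFamily γ) (hψ : ContDiff ℝ 2 ψ)
    {f : EuclideanSpace ℝ (Fin n) → ℝ} (hf : DifferentiableAt ℝ f x)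
    (hD : ∀ y, Dirac γ ψ y = f y • ψ y) (i : Fin n) :
    ∑ j, epd (kineticStress γ ψ i j) j x = 2 * epd f i x * nsq (ψ x) := by
  have hψ₁ : DifferentiableAt ℝ ψ x := hψ.differentiable two_ne_zero x
  have hdψ : ∀ k, DifferentiableAt ℝ (epd ψ k) x :=
    fun k => (hψ.epd (m := 1) k).differentiable one_ne_zero x
  have hkin : ∀ j, epd (kineticStress γ ψ i j) j x
      = rinner (γ i *ᵥ epd (epd ψ j) j x + γ j *ᵥ epd (epd ψ i) j x) (ψ x)
        + rinner (γ i *ᵥ epd ψ j x + γ j *ᵥ epd ψ i x) (epd ψ j x) := by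
    intro j
    unfold kineticStress
    have hj := differentiableAt_mulVec (γ i) (hdψ j)
    have hi := differentiableAt_mulVec (γ j) (hdψ i)
    rw [epd_rinner (hj.fun_add hi) hψ₁, epd_add hj hi, epd_mulVec _ (hdψ j),
      epd_mulVec _ (hdψ i)]
  have hderiv : ∀ a, ∑ k, γ k *ᵥ epd (epd ψ k) a x = epd f a x • ψ x + f x • epd ψ a x := by
    intro a
    rw [← epd_dirac hdψ, funext hD]
    exact epd_bilinear (ContinuousLinearMap.lsmul ℝ ℝ) hf hψ₁ a
  simp only [hkin]
  exact hγ.sum_rinner_jet_eq (hD x) hderiv (fun a b => epd_epd_comm hψ a b) i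

end Dirac

section Soler

variable {n N : ℕ} {γ : Fin n → Matrix (Fin N) (Fin N) ℂ} {lam mu : ℝ}
  {ψ : EuclideanSpace ℝ (Fin n) → (Fin N → ℂ)}

lemma solerStress_comm (i j : Fin n) (x : EuclideanSpace ℝ (Fin n)) :
    solerStress γ mu ψ i j x = solerStress γ mu ψ j i x := by
  simp only [solerStress, add_comm ((γ i).mulVec _), eq_comm (a := i)]

lemma solerStress_self (i : Fin n) (x : EuclideanSpace ℝ (Fin n)) :
    solerStress γ mu ψ i i x = kineticStress γ ψ i i x - mu * nsq (ψ x) ^ 2 := by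
  simp [solerStress, kineticStress]

lemma IsSolerSolution.sum_solerStress_self (hsoler : IsSolerSolution γ lam mu ψ)
    (x : EuclideanSpace ℝ (Fin n)) :
    ∑ i, solerStress γ mu ψ i i x = 2 * lam * nsq (ψ x) + (2 - (n : ℝ)) * mu * nsq (ψ x) ^ 2 := by
  simp only [solerStress_self, Finset.sum_sub_distrib, sum_kineticStress_self, hsoler x,
    rinner_smul_left, Finset.sum_const, Finset.card_univ, Fintype.card_fin, nsmul_eq_mul]
  rw [← nsq]
  ring

lemma IsSolerSolution.sum_epd_solerStress (hsoler : IsSolerSolution γ lam mu ψ)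
    (hγ : IsCliffordFamily γ) (hψ : ContDiff ℝ 2 ψ) (i : Fin n) (x : EuclideanSpace ℝ (Fin n)) :
    ∑ j, epd (fun y => solerStress γ mu ψ i j y) j x = 0 := by
  have hψ₁ : Differentiable ℝ ψ := hψ.differentiable two_ne_zero
  set s : EuclideanSpace ℝ (Fin n) → ℝ := fun y => nsq (ψ y)
  have hs : Differentiable ℝ s := fun y => (hψ₁ y).rinner (hψ₁ y)
  have hdψ : ∀ k, Differentiable ℝ (epd ψ k) :=
    fun k => (hψ.epd (m := 1) k).differentiable one_ne_zero
  have hkin : ∀ j, DifferentiableAt ℝ (kineticStress γ ψ i j) x := fun j =>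
    ((differentiableAt_mulVec _ (hdψ j x)).add (differentiableAt_mulVec _ (hdψ i x))).rinner
      (hψ₁ x)
  have hpot : ∀ j, epd (fun y => mu * s y ^ 2) j x = 2 * mu * s x * epd s j x := by
    intro j
    rw [epd_comp_hasDerivAt (φ := fun t => mu * t ^ 2)
      ((hasDerivAt_pow 2 (s x)).const_mul mu) (hs x)]
    ring
  have hf : epd (fun y => lam + mu * s y) i x = mu * epd s i x := by
    rw [epd_comp_hasDerivAt (φ := fun t => lam + mu * t)
      (((hasDerivAt_id (s x)).const_mul mu).const_add lam) (hs x)]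
    ring
  have hsplit : ∀ j, epd (fun y => solerStress γ mu ψ i j y) j x
      = epd (kineticStress γ ψ i j) j x
        - if i = j then epd (fun y => mu * s y ^ 2) j x else 0 := by
    intro j
    rw [show (fun y => solerStress γ mu ψ i j y) = fun y => kineticStress γ ψ i j y
        - (if i = j then 1 else 0) * (mu * s y ^ 2) from rfl,
      epd_sub (hkin j) ((((hs x).fun_pow 2).const_mul mu).const_mul _)]
    split_ifs <;> simp [epd]
  rw [Finset.sum_congr rfl fun j _ => hsplit j, Finset.sum_sub_distrib, Finset.sum_ite_eq,
    hγ.sum_epd_kineticStress hψ (((hs x).const_mul mu).const_add lam) hsoler i, hf, hpot]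
  simp only [Finset.mem_univ, if_true]
  ring

end Soler

theorem solerStress_symm_divFree_trace_general {n N : ℕ}
    (γ : Fin n → Matrix (Fin N) (Fin N) ℂ) (hγ : IsCliffordFamily γ)
    (lam mu : ℝ) (ψ : EuclideanSpace ℝ (Fin n) → (Fin N → ℂ))
    (hψ : ContDiff ℝ (⊤ : ℕ∞) ψ) (hsoler : IsSolerSolution γ lam mu ψ) :
    (∀ i j x, solerStress γ mu ψ i j x = solerStress γ mu ψ j i x) ∧
    (∀ i x, ∑ j, epd (fun y => solerStress γ mu ψ i j y) j x = 0) ∧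
    (∀ x, ∑ i, solerStress γ mu ψ i i x
      = 2 * lam * nsq (ψ x) + (2 - (n : ℝ)) * mu * (nsq (ψ x)) ^ 2) :=
  ⟨solerStress_comm, hsoler.sum_epd_solerStress hγ (hψ.of_le (WithTop.coe_le_coe.mpr le_top)),
    hsoler.sum_solerStress_self⟩

/-- for a smooth solution of the Soler equation the stress-energy tensor is
symmetric and divergence-free, and its trace is `2λ|ψ|² + (2-n)μ|ψ|⁴`. -/
theorem solerStress_symm_divFree_trace {n N : ℕ} (hn : 1 ≤ n) (hN : 1 ≤ N)
    (γ : Fin n → Matrix (Fin N) (Fin N) ℂ) (hγ : IsCliffordFamily γ)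
    (lam mu : ℝ) (ψ : EuclideanSpace ℝ (Fin n) → (Fin N → ℂ))
    (hψ : ContDiff ℝ (⊤ : ℕ∞) ψ) (hsoler : IsSolerSolution γ lam mu ψ) :
    (∀ i j x, solerStress γ mu ψ i j x = solerStress γ mu ψ j i x) ∧
    (∀ i x, ∑ j, epd (fun y => solerStress γ mu ψ i j y) j x = 0) ∧
    (∀ x, ∑ i, solerStress γ mu ψ i i x
      = 2 * lam * nsq (ψ x) + (2 - (n : ℝ)) * mu * (nsq (ψ x)) ^ 2) :=
  solerStress_symm_divFree_trace_general γ hγ lam mu ψ hψ hsoler
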